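/- arXiv:1910.12860 — 5 statements merged into one kernel-verified Lean document; each statement's English description precedes it below -/
import Mathlib

section
/- Let n ≥ 3 and m ≥ 2 be integers. Then the metric dimension of the jellyfish graph JFG(n, m) equals nm − n. -/
open SimpleGraph

/-- Vertex type of the jellyfish graph `JFG(n, m)`: cycle vertices (left) and
pendant vertices (right, a cycle vertex together with a pendant index). -/
abbrev JVert (n m : ℕ) := (ZMod n) ⊕ ((ZMod n) × Fin m)

/-- The jellyfish graph `JFG(n, m)`: the cycle `C_n` together with `m` pendant
vertices attached to each cycle vertex. -/
def jellyfish (n m : ℕ) : SimpleGraph (JVert n m) where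
  Adj u v :=
    match u, v with
    | Sum.inl i, Sum.inl j => i ≠ j ∧ (i - j = 1 ∨ j - i = 1)
    | Sum.inl i, Sum.inr p => p.1 = i
    | Sum.inr p, Sum.inl i => p.1 = i
    | Sum.inr _, Sum.inr _ => False
  symm := by
    constructor
    rintro (i | p) (j | q) h
    · exact ⟨h.1.symm, h.2.symm⟩
    · exact h
    · exact h
    · exact h
  loopless := by
    constructor
    rintro (i | p) h
    · exact h.1 rfl
    · exact h

/-- `W` is a resolving set of `G`. -/
def IsResolving {V : Type*} (G : SimpleGraph V) (W : Set V) : Prop :=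
  ∀ u v : V, u ≠ v → ∃ w ∈ W, G.dist u w ≠ G.dist v w

/-- The metric dimension of `G`: the minimum cardinality of a resolving set. -/
noncomputable def metricDim {V : Type*} (G : SimpleGraph V) : ℕ :=
  sInf {k | ∃ W : Set V, IsResolving G W ∧ W.ncard = k}

/-!
Pendant vertices at the same cycle vertex are twins: every other vertex is at the same distance
from both, one more than its distance from their common neighbour. So a resolving set misses at
most one pendant per cycle vertex and has at least `n * m - n` elements. Conversely the pendants of
nonzero index resolve the graph: two vertices outside this set are told apart by the cycle vertex
`i` of one of them, hence also by the pendant `(i, 1)`.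
-/

namespace SimpleGraph

variable {V : Type*} {G : SimpleGraph V}

theorem Connected.dist_ne_dist_self (hG : G.Connected) {u v : V} (h : u ≠ v) :
    G.dist u v ≠ G.dist v v := by
  rw [dist_self]
  exact (hG.pos_dist_of_ne h).ne'

theorem Connected.dist_eq_dist_add_one_of_neighborSet_eq_singleton (hG : G.Connected) {a x w : V}
    (ha : G.neighborSet a = {x}) (hw : w ≠ a) : G.dist a w = G.dist x w + 1 := by
  have hax : G.Adj a x := by simp [← mem_neighborSet, ha]
  obtain ⟨p, hp⟩ := hG.exists_walk_length_eq_dist x w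
  obtain ⟨q, hq⟩ := hG.exists_walk_length_eq_dist a w
  refine le_antisymm (hp ▸ dist_le (Walk.cons hax p)) ?_
  cases q with
  | nil => exact absurd rfl hw
  | @cons _ y _ hay q =>
    obtain rfl : y = x := by simpa [← mem_neighborSet, ha] using hay
    rw [← hq, Walk.length_cons]
    exact Nat.add_le_add_right (dist_le q) 1

end SimpleGraph

open SimpleGraph

section Resolving

variable {V : Type*} {G : SimpleGraph V}

theorem IsResolving.mem_or_mem {W : Set V} (hW : IsResolving G W) {a b : V} (hab : a ≠ b)
    (h : ∀ w, w ≠ a → w ≠ b → G.dist a w = G.dist b w) : a ∈ W ∨ b ∈ W := by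
  obtain ⟨w, hwW, hw⟩ := hW a b hab
  by_contra! hW'
  exact hw (h w (by rintro rfl; exact hW'.1 hwW) (by rintro rfl; exact hW'.2 hwW))

theorem metricDim_eq_of_isResolving {W : Set V} (hW : IsResolving G W)
    (hmin : ∀ W' : Set V, IsResolving G W' → W.ncard ≤ W'.ncard) : metricDim G = W.ncard :=
  le_antisymm (Nat.sInf_le ⟨W, hW, rfl⟩) <| le_csInf ⟨_, W, hW, rfl⟩ <| by
    rintro _ ⟨W', hW', rfl⟩
    exact hmin W' hW'

end Resolving

section Jellyfish

variable {n m : ℕ}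

theorem jellyfish_neighborSet_inr (p : ZMod n × Fin m) :
    (jellyfish n m).neighborSet (Sum.inr p) = {Sum.inl p.1} := by
  ext (i | q)
  · simp [jellyfish, eq_comm]
  · simp [jellyfish]

theorem jellyfish_connected [NeZero n] : (jellyfish n m).Connected := by
  have hcycle (k : ℕ) : (jellyfish n m).Reachable (Sum.inl (k : ZMod n)) (Sum.inl 0) := by
    induction k with
    | zero => simp
    | succ k ih =>
      refine Reachable.trans ?_ ih
      by_cases hk : ((k + 1 : ℕ) : ZMod n) = k
      · rw [hk]
      · exact Adj.reachable ⟨hk, Or.inl (by push_cast; ring)⟩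
  have hall (v : JVert n m) : (jellyfish n m).Reachable v (Sum.inl 0) := by
    obtain i | p := v
    · simpa using hcycle i.val
    · refine (Adj.reachable (show (jellyfish n m).Adj (Sum.inr p) (Sum.inl p.1) from rfl)).trans ?_
      simpa using hcycle p.1.val
  have : Nonempty (JVert n m) := ⟨Sum.inl 0⟩
  exact ⟨fun u v => (hall u).trans (hall v).symm⟩

theorem jellyfish_dist_inr [NeZero n] (p : ZMod n × Fin m) {w : JVert n m} (hw : w ≠ Sum.inr p) :
    (jellyfish n m).dist (Sum.inr p) w = (jellyfish n m).dist (Sum.inl p.1) w + 1 :=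
  jellyfish_connected.dist_eq_dist_add_one_of_neighborSet_eq_singleton
    (jellyfish_neighborSet_inr p) hw

theorem IsResolving.mul_sub_le_ncard_of_jellyfish [NeZero n] {W : Set (JVert n m)}
    (hW : IsResolving (jellyfish n m) W) : n * m - n ≤ W.ncard := by
  set S : Set (ZMod n × Fin m) := Sum.inr ⁻¹' W
  have hS : S.ncard ≤ W.ncard :=
    Set.ncard_le_ncard_of_injOn Sum.inr (fun _ h => h) Sum.inr_injective.injOn
  have hSc : Sᶜ.ncard ≤ n := by
    refine (Set.ncard_le_ncard_of_injOn Prod.fst (fun _ _ => Set.mem_univ _) ?_).trans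
      (by simp)
    rintro p hp q hq hpq
    by_contra hne
    refine (hW.mem_or_mem (a := Sum.inr p) (b := Sum.inr q) (by simpa using hne) ?_).elim hp hq
    intro w hwp hwq
    rw [jellyfish_dist_inr p hwp, jellyfish_dist_inr q hwq, hpq]
  have hcard := Set.ncard_add_ncard_compl S
  rw [Nat.card_prod, Nat.card_zmod, Nat.card_fin] at hcard
  omega

def jellyfishResolvingSet (n m : ℕ) [NeZero m] : Set (JVert n m) :=
  Sum.inr '' (Set.univ ×ˢ {0}ᶜ)

theorem ncard_jellyfishResolvingSet [NeZero m] :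
    (jellyfishResolvingSet n m).ncard = n * m - n := by
  rw [jellyfishResolvingSet, Set.ncard_image_of_injective _ Sum.inr_injective, Set.ncard_prod,
    Set.ncard_univ, Set.ncard_compl, Set.ncard_singleton, Nat.card_zmod, Nat.card_fin,
    Nat.mul_sub_one]

theorem jellyfish_exists_dist_inl_ne [NeZero n] [NeZero m] {u v : JVert n m}
    (hu : u ∉ jellyfishResolvingSet n m) (hv : v ∉ jellyfishResolvingSet n m) (huv : u ≠ v) :
    ∃ i, (jellyfish n m).dist (Sum.inl i) u ≠ (jellyfish n m).dist (Sum.inl i) v := by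
  simp only [SimpleGraph.dist_comm (u := Sum.inl _)]
  obtain i | ⟨i, a⟩ := u
  · exact ⟨i, (jellyfish_connected.dist_ne_dist_self huv.symm).symm⟩
  obtain i' | ⟨i', b⟩ := v
  · exact ⟨i', jellyfish_connected.dist_ne_dist_self huv⟩
  obtain rfl : a = 0 := by simpa [jellyfishResolvingSet] using hu
  obtain rfl : b = 0 := by simpa [jellyfishResolvingSet] using hv
  have hii' : i' ≠ i := by rintro rfl; exact huv rfl
  refine ⟨i, ?_⟩
  rw [jellyfish_dist_inr _ (by simp), jellyfish_dist_inr _ (by simp), dist_self]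
  simpa [eq_comm] using jellyfish_connected.dist_ne_dist_self (Sum.inl_injective.ne hii')

theorem isResolving_jellyfishResolvingSet [NeZero n] [NeZero m] (hm : 2 ≤ m) :
    IsResolving (jellyfish n m) (jellyfishResolvingSet n m) := by
  intro u v huv
  by_cases hu : u ∈ jellyfishResolvingSet n m
  · exact ⟨u, hu, (jellyfish_connected.dist_ne_dist_self huv.symm).symm⟩
  by_cases hv : v ∈ jellyfishResolvingSet n m
  · exact ⟨v, hv, jellyfish_connected.dist_ne_dist_self huv⟩
  obtain ⟨i, hi⟩ := jellyfish_exists_dist_inl_ne hu hv huv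
  have hw : Sum.inr (i, ⟨1, hm⟩) ∈ jellyfishResolvingSet n m :=
    ⟨_, ⟨trivial, Fin.ne_of_val_ne one_ne_zero⟩, rfl⟩
  refine ⟨_, hw, ?_⟩
  rw [SimpleGraph.dist_comm (u := u), SimpleGraph.dist_comm (u := v),
    jellyfish_dist_inr _ (ne_of_mem_of_not_mem hw hu).symm,
    jellyfish_dist_inr _ (ne_of_mem_of_not_mem hw hv).symm]
  simpa using hi

end Jellyfish

theorem jellyfish_metricDim (n m : ℕ) (hn : 3 ≤ n) (hm : 2 ≤ m) :
    metricDim (jellyfish n m) = n * m - n := by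
  have : NeZero n := ⟨by omega⟩
  have : NeZero m := ⟨by omega⟩
  rw [← ncard_jellyfishResolvingSet,
    metricDim_eq_of_isResolving (isResolving_jellyfishResolvingSet hm)]
  intro W hW
  exact ncard_jellyfishResolvingSet.trans_le hW.mul_sub_le_ncard_of_jellyfish
end

section
/- Let n ≥ 3 and m ≥ 2 be integers. Then the set W consisting of all pendant vertices of the jellyfish graph JFG(n, m) except the single pendant vertex v_{nm} (so |W| = nm − 1) is a resolving set of JFG(n, m). -/
open SimpleGraph

/-! The graph is connected, so a vertex of `W` is resolved from every other vertex by itself: its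
distance to itself is `0`, all others are positive. The vertices outside `W` are the cycle vertices
and `v_{nm}`; a cycle vertex `i` is told apart from every other vertex by the pendant `v_{i1} ∈ W`,
whose only neighbour is `i`. -/

namespace SimpleGraph

variable {V : Type*} {G : SimpleGraph V}

lemma dist_ne_dist_of_adj_of_not_adj {u v w : V} (hu : G.Adj u w) (hv : ¬G.Adj v w) :
    G.dist u w ≠ G.dist v w := by
  rw [dist_eq_one_iff_adj.mpr hu]
  exact fun h ↦ hv (dist_eq_one_iff_adj.mp h.symm)

lemma isResolving_of_forall_notMem (hG : G.Preconnected) {W : Set V}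
    (h : ∀ u v, u ∉ W → v ∉ W → u ≠ v → ∃ w ∈ W, G.dist u w ≠ G.dist v w) :
    IsResolving G W := by
  intro u v huv
  by_cases hu : u ∈ W
  · refine ⟨u, hu, ?_⟩
    rw [dist_self]
    exact ((hG v u).pos_dist_of_ne huv.symm).ne
  by_cases hv : v ∈ W
  · refine ⟨v, hv, ?_⟩
    rw [dist_self]
    exact ((hG u v).pos_dist_of_ne huv).ne'
  exact h u v hu hv huv

end SimpleGraph

section Jellyfish

variable {n m : ℕ}

lemma jellyfish_adj_inr_iff {v : JVert n m} {i : ZMod n} {a : Fin m} :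
    (jellyfish n m).Adj v (Sum.inr (i, a)) ↔ v = Sum.inl i := by
  rcases v with j | p
  · exact ⟨fun h ↦ (show i = j from h) ▸ rfl, fun h ↦ (Sum.inl_injective h).symm⟩
  · exact ⟨False.elim, fun h ↦ Sum.inr_ne_inl h |>.elim⟩

lemma jellyfish_reachable_inl_add_one (i : ZMod n) :
    (jellyfish n m).Reachable (Sum.inl i) (Sum.inl (i + 1)) := by
  by_cases h : i = i + 1
  · rw [← h]
  · exact Adj.reachable ⟨h, Or.inr (add_sub_cancel_left i 1)⟩

lemma jellyfish_reachable_inl_add_intCast (i : ZMod n) (k : ℤ) :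
    (jellyfish n m).Reachable (Sum.inl i) (Sum.inl (i + k)) := by
  induction k using Int.induction_on with
  | zero => simp
  | succ k ih =>
    simpa [add_assoc] using ih.trans (jellyfish_reachable_inl_add_one _)
  | pred k ih =>
    have h : i + ((-k - 1 : ℤ) : ZMod n) + 1 = i + ((-k : ℤ) : ZMod n) := by push_cast; ring
    exact ih.trans (h ▸ jellyfish_reachable_inl_add_one _).symm

lemma jellyfish_preconnected : (jellyfish n m).Preconnected := by
  have hinl (i j : ZMod n) : (jellyfish n m).Reachable (Sum.inl i) (Sum.inl j) := by
    obtain ⟨k, hk⟩ := ZMod.intCast_surjective (j - i)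
    simpa [hk] using jellyfish_reachable_inl_add_intCast (m := m) i k
  have hinr (p : ZMod n × Fin m) : (jellyfish n m).Reachable (Sum.inl p.1) (Sum.inr p) :=
    (jellyfish_adj_inr_iff.mpr rfl).reachable
  rintro (i | p) (j | q)
  · exact hinl i j
  · exact (hinl i q.1).trans (hinr q)
  · exact (hinr p).symm.trans (hinl p.1 j)
  · exact ((hinr p).symm.trans (hinl p.1 q.1)).trans (hinr q)

lemma jellyfish_dist_inl_ne_dist {v : JVert n m} {i : ZMod n} (a : Fin m) (hv : v ≠ Sum.inl i) :
    (jellyfish n m).dist (Sum.inl i) (Sum.inr (i, a)) ≠ (jellyfish n m).dist v (Sum.inr (i, a)) :=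
  dist_ne_dist_of_adj_of_not_adj (jellyfish_adj_inr_iff.mpr rfl) (jellyfish_adj_inr_iff.not.mpr hv)

end Jellyfish

theorem jellyfish_pendants_minus_last_resolving (n m : ℕ) (hm : 2 ≤ m) :
    IsResolving (jellyfish n m)
      (Set.range (Sum.inr : ZMod n × Fin m → JVert n m) \
        {Sum.inr ((n : ZMod n), (⟨m - 1, by omega⟩ : Fin m))}) := by
  set x : JVert n m := Sum.inr ((n : ZMod n), (⟨m - 1, by omega⟩ : Fin m))
  have hcycle (i : ZMod n) (v : JVert n m) (hv : v ≠ Sum.inl i) : ∃ w ∈ Set.range Sum.inr \ {x},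
      (jellyfish n m).dist (Sum.inl i) w ≠ (jellyfish n m).dist v w := by
    refine ⟨Sum.inr (i, ⟨0, by omega⟩), ⟨⟨_, rfl⟩, ?_⟩, jellyfish_dist_inl_ne_dist _ hv⟩
    simp only [x, Set.mem_singleton_iff, Sum.inr.injEq, Prod.mk.injEq, Fin.mk.injEq, not_and]
    omega
  refine isResolving_of_forall_notMem jellyfish_preconnected ?_
  rintro (i | p) v hu hv huv
  · exact hcycle i v huv.symm
  rcases v with j | q
  · obtain ⟨w, hw, h⟩ := hcycle j _ huv
    exact ⟨w, hw, h.symm⟩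
  · have hp : Sum.inr p = x := by simpa using hu
    have hq : Sum.inr q = x := by simpa using hv
    exact absurd (hp.trans hq.symm) huv
end

section
/- Let n ≥ 8 be an even integer and let k = n/2 − 1. Let Γ = Cay(ℤ_n, S_k) be the Cayley graph on the cyclic group ℤ_n with connection set S_k = {1, 2, ..., k} ∪ {n−k, ..., n−1} = ℤ_n \ {0, n/2} (so Γ is the cocktail party graph CP(k+1), i.e., the complete graph K_n with a perfect matching removed). Then the metric dimension of Γ equals k + 1. -/
open SimpleGraph

/-- The Cayley graph `Cay(ℤ_n, S)` with connection set `S = ℤ_n \ {0, n/2}`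
(for `n` even this is the cocktail party graph `CP(n/2)`, i.e. `K_n` minus a
perfect matching): `x ~ y` iff `y - x ∉ {0, n/2}`.  (For `n` even the set
`{0, n/2}` is closed under negation, so the condition is stated symmetrically;
the two conjuncts are then equivalent.) -/
def cocktailParty (n : ℕ) : SimpleGraph (ZMod n) where
  Adj x y := x ≠ y ∧ y - x ≠ ((n / 2 : ℕ) : ZMod n) ∧ x - y ≠ ((n / 2 : ℕ) : ZMod n)
  symm := by
    constructor
    rintro x y ⟨h1, h2, h3⟩
    exact ⟨h1.symm, h3, h2⟩
  loopless := by
    constructor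
    rintro x ⟨h1, -⟩
    exact h1 rfl

/-!
In `K_n` minus a perfect matching every vertex `x` is at distance `1` from all vertices except
itself and its antipode `x + n/2`, which is at distance `2`. So `x` and `x + n/2` are twins:
only a vertex of the pair itself can resolve them. Conversely a set meeting every antipodal pair
resolves all pairs. Such a set `W` has at least `n/2` elements, since `W` and `W - n/2` cover
`ℤ_n`, and `{0, 1, …, n/2 - 1}` is one of exactly that size.
-/

lemma metricDim_eq_of_forall_le {V : Type*} {G : SimpleGraph V} {m : ℕ}
    (hex : ∃ W : Set V, IsResolving G W ∧ W.ncard = m)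
    (hle : ∀ W : Set V, IsResolving G W → m ≤ W.ncard) :
    metricDim G = m :=
  le_antisymm (Nat.sInf_le hex) (le_csInf ⟨m, hex⟩ fun _ ⟨W, hW, hm⟩ ↦ hm ▸ hle W hW)

lemma IsResolving.mem_or_mem_of_twins {V : Type*} {G : SimpleGraph V} {W : Set V}
    (hW : IsResolving G W) {u v : V} (huv : u ≠ v)
    (htwin : ∀ w, w ≠ u → w ≠ v → G.dist u w = G.dist v w) : u ∈ W ∨ v ∈ W := by
  by_contra! h
  obtain ⟨w, hw, hne⟩ := hW u v huv
  exact hne (htwin w (fun hwu ↦ h.1 (hwu ▸ hw)) fun hwv ↦ h.2 (hwv ▸ hw))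

lemma SimpleGraph.dist_eq_two_of_adj_of_adj {V : Type*} {G : SimpleGraph V} {u v w : V}
    (huv : u ≠ v) (hnadj : ¬ G.Adj u v) (huw : G.Adj u w) (hwv : G.Adj w v) :
    G.dist u v = 2 := by
  let p : G.Walk u v := .cons huw (.cons hwv .nil)
  have hle : G.dist u v ≤ 2 := G.dist_le p
  have hlt : 1 < G.dist u v := p.reachable.one_lt_dist_of_ne_of_not_adj huv hnadj
  omega

lemma card_le_two_mul_ncard_of_forall_mem_or_add_mem {A : Type*} [AddGroup A] {W : Set A}
    (a : A) (hW : ∀ x, x ∈ W ∨ x + a ∈ W) : Nat.card A ≤ 2 * W.ncard := by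
  have hcover : Set.univ = W ∪ (· - a) '' W := by
    refine (Set.eq_univ_of_forall fun x ↦ ?_).symm
    rcases hW x with hx | hx
    · exact .inl hx
    · exact .inr ⟨x + a, hx, add_sub_cancel_right x a⟩
  calc Nat.card A = (W ∪ (· - a) '' W).ncard := by rw [← hcover, Set.ncard_univ]
    _ ≤ W.ncard + ((· - a) '' W).ncard := Set.ncard_union_le _ _
    _ = 2 * W.ncard := by rw [Set.ncard_image_of_injective _ (sub_left_injective), two_mul]

lemma ZMod.ncard_natCast_image_Iio {n m : ℕ} (hm : m ≤ n) :
    ((Nat.cast : ℕ → ZMod n) '' Set.Iio m).ncard = m := by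
  refine (Set.InjOn.ncard_image fun i hi j hj hij ↦ ?_).trans (Set.ncard_Iio_nat m)
  rw [ZMod.natCast_eq_natCast_iff', Nat.mod_eq_of_lt (by simp at hi; omega),
    Nat.mod_eq_of_lt (by simp at hj; omega)] at hij
  exact hij

namespace CocktailParty

variable {n : ℕ}

local notation "𝔥" => ((n / 2 : ℕ) : ZMod n)

lemma half_add_half (hev : Even n) : 𝔥 + 𝔥 = 0 := by
  obtain ⟨m, hm⟩ := hev
  rw [← Nat.cast_add, show n / 2 + n / 2 = n by omega, ZMod.natCast_self]

lemma neg_half (hev : Even n) : -𝔥 = 𝔥 :=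
  neg_eq_of_add_eq_zero_left (half_add_half hev)

lemma add_half_add_half (hev : Even n) (x : ZMod n) : x + 𝔥 + 𝔥 = x := by
  rw [add_assoc, half_add_half hev, add_zero]

lemma half_ne_zero (hn : 2 ≤ n) : 𝔥 ≠ 0 := by
  rw [Ne, ZMod.natCast_eq_zero_iff]
  exact Nat.not_dvd_of_pos_of_lt (by omega) (by omega)

lemma half_ne_one (hn : 4 ≤ n) : 𝔥 ≠ 1 := by
  rw [← Nat.cast_one, Ne, ZMod.natCast_eq_natCast_iff', Nat.mod_eq_of_lt (by omega),
    Nat.mod_eq_of_lt (by omega)]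
  omega

lemma adj_iff (hev : Even n) {x y : ZMod n} :
    (cocktailParty n).Adj x y ↔ y ≠ x ∧ y ≠ x + 𝔥 := by
  have h₁ : y - x = 𝔥 ↔ y = x + 𝔥 := sub_eq_iff_eq_add'
  have h₂ : x - y = 𝔥 ↔ y = x + 𝔥 := by rw [← neg_sub, neg_eq_iff_eq_neg, neg_half hev, h₁]
  change x ≠ y ∧ ¬y - x = 𝔥 ∧ ¬x - y = 𝔥 ↔ _
  rw [h₁, h₂, ne_comm]
  tauto

lemma dist_eq_one (hev : Even n) {x y : ZMod n} (hyx : y ≠ x) (hy : y ≠ x + 𝔥) :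
    (cocktailParty n).dist x y = 1 :=
  dist_eq_one_iff_adj.2 ((adj_iff hev).2 ⟨hyx, hy⟩)

lemma dist_add_half (hn : 4 ≤ n) (hev : Even n) (x : ZMod n) :
    (cocktailParty n).dist x (x + 𝔥) = 2 := by
  have : Fact (1 < n) := ⟨by omega⟩
  have hhalf : x + 𝔥 ≠ x := by simpa using half_ne_zero (by omega)
  refine dist_eq_two_of_adj_of_adj hhalf.symm (fun h ↦ ((adj_iff hev).1 h).2 rfl)
    (w := x + 1) ?_ ?_
  · exact (adj_iff hev).2 ⟨by simp, by simpa [eq_comm] using half_ne_one hn⟩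
  · refine (adj_iff hev).2 ⟨by simpa [eq_comm] using half_ne_one hn, ?_⟩
    simp

lemma dist_ne_zero (hn : 4 ≤ n) (hev : Even n) {x y : ZMod n} (hxy : x ≠ y) :
    (cocktailParty n).dist x y ≠ 0 := by
  by_cases hy : y = x + 𝔥
  · simp [hy, dist_add_half hn hev]
  · simp [dist_eq_one hev hxy.symm hy]

lemma dist_le_one (hev : Even n) {x y : ZMod n} (hy : y ≠ x + 𝔥) :
    (cocktailParty n).dist x y ≤ 1 := by
  by_cases hyx : y = x
  · simp [hyx]
  · exact (dist_eq_one hev hyx hy).le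

lemma isResolving_iff (hn : 4 ≤ n) (hev : Even n) {W : Set (ZMod n)} :
    IsResolving (cocktailParty n) W ↔ ∀ x, x ∈ W ∨ x + 𝔥 ∈ W := by
  refine ⟨fun hW x ↦ ?_, fun hcover u v huv ↦ ?_⟩
  · refine hW.mem_or_mem_of_twins (by simpa [eq_comm] using half_ne_zero (n := n) (by omega))
      fun w hwx hwx' ↦ ?_
    rw [dist_eq_one hev hwx hwx', dist_eq_one hev hwx' (by rwa [add_half_add_half hev])]
  rcases hcover u with hu | hu
  · exact ⟨u, hu, by rw [dist_self]; exact (dist_ne_zero hn hev huv.symm).symm⟩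
  · refine ⟨u + 𝔥, hu, ?_⟩
    have hv : (cocktailParty n).dist v (u + 𝔥) ≤ 1 :=
      dist_le_one hev fun h ↦ huv (add_right_cancel h)
    rw [dist_add_half hn hev]
    omega

lemma mem_or_add_half_mem_natCast_image_Iio [NeZero n] (hev : Even n) (x : ZMod n) :
    x ∈ Nat.cast '' Set.Iio (n / 2) ∨ x + 𝔥 ∈ Nat.cast '' Set.Iio (n / 2) := by
  by_cases hx : x.val < n / 2
  · exact .inl ⟨x.val, hx, ZMod.natCast_zmod_val x⟩
  · have hlt : x.val - n / 2 < n / 2 := by have := x.val_lt; have := hev.two_dvd; omega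
    refine .inr ⟨x.val - n / 2, hlt, ?_⟩
    rw [Nat.cast_sub (by omega), ZMod.natCast_zmod_val, sub_eq_add_neg, neg_half hev]

end CocktailParty

theorem cocktailParty_metricDim (n : ℕ) (hn : 8 ≤ n) (hev : Even n) (k : ℕ)
    (hk : k = n / 2 - 1) :
    metricDim (cocktailParty n) = k + 1 := by
  have : NeZero n := ⟨by omega⟩
  rw [hk, Nat.sub_add_cancel (by omega)]
  refine metricDim_eq_of_forall_le ⟨_, ?_, ZMod.ncard_natCast_image_Iio (by omega)⟩ fun W hW ↦ ?_
  · exact (CocktailParty.isResolving_iff (by omega) hev).2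
      (CocktailParty.mem_or_add_half_mem_natCast_image_Iio hev)
  · have hcard := card_le_two_mul_ncard_of_forall_mem_or_add_mem _
      ((CocktailParty.isResolving_iff (by omega) hev).1 hW)
    rw [Nat.card_zmod] at hcard
    omega
end

section
/- Let n ≥ 8 be an even integer and let k = n/2 − 1. Let Γ = Cay(ℤ_n, S_k) be the Cayley graph on ℤ_n with connection set S_k = ℤ_n \ {0, n/2}. Then every clique W of Γ of cardinality k + 1 is a resolving set of Γ; moreover, for any such clique W and any vertex x ∉ W, the set W ∪ {x} is also a resolving set of Γ. -/
open SimpleGraph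

/-!
For `n` even write `x̄ = x + n/2` for the antipode of `x ∈ ℤ_n`. Distinct vertices of
`cocktailParty n` are adjacent unless antipodal, and antipodal ones are at distance `2`
(through `x + 1`). A clique contains no antipodal pair, so a clique of size `n/2` meets each
of the `n/2` antipodal pairs. Given `u ≠ v`, if one of them lies in `W` it is separated from
the other by distance `0`; otherwise `ū ∈ W` is at distance `2` from `u` and `1` from `v`.
-/

theorem IsResolving.mono {V : Type*} {G : SimpleGraph V} {W W' : Set V}
    (hW : IsResolving G W) (h : W ⊆ W') : IsResolving G W' := fun u v huv =>
  let ⟨w, hw, hne⟩ := hW u v huv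
  ⟨w, h hw, hne⟩

namespace ZMod

variable {n : ℕ}

theorem natCast_half_add_self (hev : Even n) :
    ((n / 2 : ℕ) : ZMod n) + ((n / 2 : ℕ) : ZMod n) = 0 := by
  rw [← Nat.cast_add, ← two_mul, Nat.two_mul_div_two_of_even hev, natCast_self]

theorem natCast_half_ne_zero (hn : 2 ≤ n) : ((n / 2 : ℕ) : ZMod n) ≠ 0 := by
  rw [Ne, natCast_eq_zero_iff]
  exact Nat.not_dvd_of_pos_of_lt (by omega) (by omega)

theorem natCast_half_ne_one (hn : 4 ≤ n) : ((n / 2 : ℕ) : ZMod n) ≠ 1 := by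
  rw [← Nat.cast_one, Ne, natCast_eq_natCast_iff', Nat.mod_eq_of_lt (by omega : n / 2 < n),
    Nat.mod_eq_of_lt (by omega : 1 < n)]
  omega

end ZMod

namespace cocktailParty

variable {n : ℕ}

theorem adj_iff (hev : Even n) {x y : ZMod n} :
    (cocktailParty n).Adj x y ↔ x ≠ y ∧ y ≠ x + ((n / 2 : ℕ) : ZMod n) := by
  have hmm := ZMod.natCast_half_add_self hev
  constructor
  · rintro ⟨hxy, hyx, -⟩
    exact ⟨hxy, fun h => hyx (sub_eq_iff_eq_add'.2 h)⟩
  · rintro ⟨hxy, hyx⟩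
    exact ⟨hxy, fun h => hyx (sub_eq_iff_eq_add'.1 h),
      fun h => hyx (by linear_combination -h - hmm)⟩

theorem dist_eq (hn : 4 ≤ n) (hev : Even n) (x y : ZMod n) :
    (cocktailParty n).dist x y =
      if x = y then 0 else if y = x + ((n / 2 : ℕ) : ZMod n) then 2 else 1 := by
  set m : ZMod n := ((n / 2 : ℕ) : ZMod n)
  have hm1 : m ≠ 1 := ZMod.natCast_half_ne_one hn
  have : Fact (1 < n) := ⟨by omega⟩
  split_ifs with hxy hym
  · rw [hxy, dist_self]
  · have hx1 : (cocktailParty n).Adj x (x + 1) := (adj_iff hev).2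
      ⟨fun h => one_ne_zero (by linear_combination -h), fun h => hm1 (by linear_combination -h)⟩
    have h1y : (cocktailParty n).Adj (x + 1) y := (adj_iff hev).2
      ⟨fun h => hm1 (by linear_combination -hym - h),
        fun h => one_ne_zero (by linear_combination hym - h)⟩
    have hle : (cocktailParty n).dist x y ≤ 2 := by
      simpa using dist_le (hx1.toWalk.append h1y.toWalk)
    have hne0 : (cocktailParty n).dist x y ≠ 0 := fun h =>
      hxy ((Reachable.dist_eq_zero_iff ⟨hx1.toWalk.append h1y.toWalk⟩).1 h)
    have hne1 : (cocktailParty n).dist x y ≠ 1 := fun h =>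
      ((adj_iff hev).1 (dist_eq_one_iff_adj.1 h)).2 hym
    omega
  · exact dist_eq_one_iff_adj.2 ((adj_iff hev).2 ⟨hxy, hym⟩)

theorem mem_or_add_half_mem_of_isClique (hn : 2 ≤ n) (hev : Even n) {W : Set (ZMod n)}
    (hW : (cocktailParty n).IsClique W) (hcard : W.ncard = n / 2) (x : ZMod n) :
    x ∈ W ∨ x + ((n / 2 : ℕ) : ZMod n) ∈ W := by
  have : NeZero n := ⟨by omega⟩
  set m : ZMod n := ((n / 2 : ℕ) : ZMod n)
  have hmm : m + m = 0 := ZMod.natCast_half_add_self hev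
  have hdisj : Disjoint W ((· + m) '' W) := by
    refine Set.disjoint_left.2 fun a ha ⟨b, hb, hba⟩ => ?_
    have hab : b ≠ a := fun h => ZMod.natCast_half_ne_zero hn (by simpa [h] using hba)
    exact ((adj_iff hev).1 (hW hb ha hab)).2 hba.symm
  have huniv : W ∪ (· + m) '' W = Set.univ := by
    rw [Set.eq_univ_iff_ncard, Set.ncard_union_eq hdisj,
      Set.ncard_image_of_injective _ (add_left_injective m), hcard, Nat.card_zmod,
      ← two_mul, Nat.two_mul_div_two_of_even hev]
  rcases (huniv ▸ Set.mem_univ x : x ∈ W ∪ (· + m) '' W) with hx | ⟨b, hb, rfl⟩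
  · exact .inl hx
  · exact .inr (by rwa [add_assoc, hmm, add_zero])

theorem isResolving_of_forall_mem_or_add_half_mem (hn : 4 ≤ n) (hev : Even n)
    {W : Set (ZMod n)} (hW : ∀ x, x ∈ W ∨ x + ((n / 2 : ℕ) : ZMod n) ∈ W) :
    IsResolving (cocktailParty n) W := by
  intro u v huv
  by_cases hu : u ∈ W
  · exact ⟨u, hu, by rw [dist_self, dist_eq hn hev, if_neg huv.symm]; split_ifs <;> simp⟩
  by_cases hv : v ∈ W
  · exact ⟨v, hv, by rw [dist_self, dist_eq hn hev, if_neg huv]; split_ifs <;> simp⟩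
  have hu' := (hW u).resolve_left hu
  refine ⟨_, hu', ?_⟩
  have hvu : v ≠ u + ((n / 2 : ℕ) : ZMod n) := fun h => hv (h ▸ hu')
  simp [dist_eq hn hev, hvu, huv, ZMod.natCast_half_ne_zero (n := n) (by omega)]

end cocktailParty

theorem cocktailParty_clique_resolving (n : ℕ) (hn : 8 ≤ n) (hev : Even n) (k : ℕ)
    (hk : k = n / 2 - 1) :
    ∀ W : Set (ZMod n), (cocktailParty n).IsClique W → W.ncard = k + 1 →
      IsResolving (cocktailParty n) W ∧
      ∀ x : ZMod n, x ∉ W → IsResolving (cocktailParty n) (insert x W) := by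
  intro W hW hcard
  have hcover := cocktailParty.mem_or_add_half_mem_of_isClique (by omega) hev hW (by omega)
  have hres := cocktailParty.isResolving_of_forall_mem_or_add_half_mem (by omega) hev hcover
  exact ⟨hres, fun x _ => hres.mono (Set.subset_insert x W)⟩
end

section
/- Let n ≥ 8 be an even integer and let k = n/2 − 1. Let Γ = Cay(ℤ_n, S_k) be the Cayley graph on ℤ_n with connection set S_k = ℤ_n \ {0, n/2}. Then the minimum cardinality of a doubly resolving set of Γ equals k + 1; in particular, the clique Z = {1, 2, ..., k, k+1} is a doubly resolving set of Γ. -/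
/-!
Write `σ x = x + n/2`, so that `d(x, y)` is `0`, `2` or `1` according as `y = x`, `y = σ x` or
neither. If `Z` misses both `u` and `σ u`, every vertex of `Z` is adjacent to both of them, so
`u, σ u` are not doubly resolved: a doubly resolving set meets each of the `n/2` pairs
`{u, σ u}`, hence has at least `n/2` elements. Conversely, let `Z` contain exactly one vertex of
each pair and at least three vertices, e.g. `Z = {1, …, n/2}`. For `u ≠ v`, the vertex `a ∈ Z` of
the pair of `u` has `d(u, a) ≠ d(v, a)`, while some third `y ∈ Z` lies outside the pairs of `u`
and `v` and is adjacent to both, so `a, y` doubly resolve `u, v`.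
-/

open SimpleGraph

/-- Vertices `x, y` doubly resolve `u, v` if `d(u,x) - d(u,y) ≠ d(v,x) - d(v,y)`;
`Z` is a doubly resolving set if every two distinct vertices are doubly resolved
by some two vertices of `Z`. -/
def IsDoublyResolving {V : Type*} (G : SimpleGraph V) (Z : Set V) : Prop :=
  ∀ u v : V, u ≠ v → ∃ x ∈ Z, ∃ y ∈ Z,
    (G.dist u x : ℤ) - (G.dist u y : ℤ) ≠ (G.dist v x : ℤ) - (G.dist v y : ℤ)

/-- `ψ(G)`: the minimum cardinality of a doubly resolving set of `G`. -/
noncomputable def doublyResolvingDim {V : Type*} (G : SimpleGraph V) : ℕ :=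
  sInf {k | ∃ Z : Set V, IsDoublyResolving G Z ∧ Z.ncard = k}

theorem Function.Involutive.card_le_two_mul_ncard {α : Type*} [Finite α] {σ : α → α}
    (hσ : Function.Involutive σ) {Z : Set α} (hZ : ∀ u, u ∈ Z ∨ σ u ∈ Z) :
    Nat.card α ≤ 2 * Z.ncard := by
  have hcover : Set.univ ⊆ Z ∪ σ '' Z := fun u _ =>
    (hZ u).imp id fun h => ⟨σ u, h, hσ u⟩
  calc Nat.card α = (Set.univ : Set α).ncard := (Set.ncard_univ α).symm
    _ ≤ (Z ∪ σ '' Z).ncard := Set.ncard_le_ncard hcover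
    _ ≤ Z.ncard + (σ '' Z).ncard := Set.ncard_union_le _ _
    _ = 2 * Z.ncard := by rw [Set.ncard_image_of_injective Z hσ.injective, two_mul]

theorem Function.Injective.two_mul_ncard_le_card {α : Type*} [Finite α] {σ : α → α}
    (hσ : Function.Injective σ) {Z : Set α} (hZ : ∀ u ∈ Z, σ u ∉ Z) :
    2 * Z.ncard ≤ Nat.card α := by
  have hdisj : Disjoint Z (σ '' Z) :=
    Set.disjoint_left.mpr fun u hu ⟨v, hv, hvu⟩ => hZ v hv (hvu ▸ hu)
  calc 2 * Z.ncard = Z.ncard + (σ '' Z).ncard := by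
        rw [Set.ncard_image_of_injective Z hσ, two_mul]
    _ = (Z ∪ σ '' Z).ncard := (Set.ncard_union_eq hdisj).symm
    _ ≤ Nat.card α := Set.ncard_le_card _

theorem Function.Involutive.two_mul_ncard_eq_card {α : Type*} [Finite α] {σ : α → α}
    (hσ : Function.Involutive σ) {Z : Set α} (hZ : ∀ u, u ∈ Z ↔ σ u ∉ Z) :
    2 * Z.ncard = Nat.card α :=
  le_antisymm (hσ.injective.two_mul_ncard_le_card fun u => (hZ u).mp)
    (hσ.card_le_two_mul_ncard fun u => or_iff_not_imp_left.mpr (not_imp_comm.mp (hZ u).mpr))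

theorem Set.exists_mem_ne_of_three_le_ncard {α : Type*} {σ : α → α} {Z : Set α}
    (hZ : ∀ u ∈ Z, σ u ∉ Z) (h3 : 3 ≤ Z.ncard) (u v : α) :
    ∃ y ∈ Z, y ≠ u ∧ y ≠ σ u ∧ y ≠ v ∧ y ≠ σ v := by
  classical
  let rep : α → α := fun w => if w ∈ Z then w else σ w
  have hpair : ({rep u, rep v} : Set α).ncard < Z.ncard :=
    ((Set.ncard_insert_le _ _).trans (by rw [Set.ncard_singleton])).trans_lt (by omega)
  obtain ⟨y, hyZ, hy⟩ := Set.exists_mem_notMem_of_ncard_lt_ncard hpair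
  have hrep : ∀ w, y = w ∨ y = σ w → y = rep w := by
    rintro w (rfl | rfl)
    · exact (if_pos hyZ).symm
    · exact (if_neg fun h => hZ _ h hyZ).symm
  refine ⟨y, hyZ, ?_, ?_, ?_, ?_⟩ <;> intro h <;> apply hy
  · exact Or.inl (hrep u (Or.inl h))
  · exact Or.inl (hrep u (Or.inr h))
  · exact Or.inr (hrep v (Or.inl h))
  · exact Or.inr (hrep v (Or.inr h))

namespace SimpleGraph

variable {V : Type*}

structure IsCocktailParty (G : SimpleGraph V) (σ : V → V) : Prop where
  involutive : Function.Involutive σ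
  apply_ne : ∀ x, σ x ≠ x
  adj_iff : ∀ x y, G.Adj x y ↔ x ≠ y ∧ y ≠ σ x

namespace IsCocktailParty

variable {G : SimpleGraph V} {σ : V → V}

theorem dist_eq_one (hG : G.IsCocktailParty σ) {x y : V} (hxy : x ≠ y) (hy : y ≠ σ x) :
    G.dist x y = 1 :=
  dist_eq_one_iff_adj.mpr ((hG.adj_iff x y).mpr ⟨hxy, hy⟩)

theorem preconnected (hG : G.IsCocktailParty σ) (hw : ∀ x, ∃ w, w ≠ x ∧ w ≠ σ x) :
    G.Preconnected := by
  intro x y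
  by_cases hyx : y = σ x
  · obtain ⟨w, hwx, hwσ⟩ := hw x
    have hxw : G.Adj x w := (hG.adj_iff x w).mpr ⟨hwx.symm, hwσ⟩
    have hwy : G.Adj w y :=
      (hG.adj_iff w y).mpr ⟨hyx ▸ hwσ, fun h => hwx (hG.involutive.injective (hyx ▸ h.symm))⟩
    exact hxw.reachable.trans hwy.reachable
  by_cases hxy : x = y
  · exact hxy ▸ Reachable.refl x
  · exact ((hG.adj_iff x y).mpr ⟨hxy, hyx⟩).reachable

theorem dist_ne_dist (hG : G.IsCocktailParty σ) (hconn : G.Preconnected) {u v a : V}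
    (huv : u ≠ v) (ha : a = u ∨ a = σ u) : G.dist u a ≠ G.dist v a := by
  rcases ha with rfl | rfl
  · rw [dist_self]
    exact ((hconn v a).pos_dist_of_ne (Ne.symm huv)).ne
  · have hfar : G.dist u (σ u) ≠ 0 ∧ G.dist u (σ u) ≠ 1 :=
      ⟨((hconn u (σ u)).pos_dist_of_ne (hG.apply_ne u).symm).ne',
        fun h => ((hG.adj_iff u (σ u)).mp (dist_eq_one_iff_adj.mp h)).2 rfl⟩
    by_cases hv : v = σ u
    · rw [hv, dist_self]
      exact hfar.1
    · rw [hG.dist_eq_one hv fun h => huv (hG.involutive.injective h)]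
      exact hfar.2

theorem mem_or_apply_mem (hG : G.IsCocktailParty σ) {Z : Set V} (hZ : IsDoublyResolving G Z)
    (u : V) : u ∈ Z ∨ σ u ∈ Z := by
  by_contra! ⟨hu, hσu⟩
  have hdist : ∀ z ∈ Z, G.dist u z = 1 ∧ G.dist (σ u) z = 1 := fun z hz =>
    ⟨hG.dist_eq_one (ne_of_mem_of_not_mem hz hu).symm (ne_of_mem_of_not_mem hz hσu),
      hG.dist_eq_one (ne_of_mem_of_not_mem hz hσu).symm
        (by rw [hG.involutive u]; exact ne_of_mem_of_not_mem hz hu)⟩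
  obtain ⟨x, hx, y, hy, hxy⟩ := hZ u (σ u) (hG.apply_ne u).symm
  rw [(hdist x hx).1, (hdist x hx).2, (hdist y hy).1, (hdist y hy).2] at hxy
  exact hxy rfl

theorem isDoublyResolving (hG : G.IsCocktailParty σ) {Z : Set V} (hZ : ∀ u, u ∈ Z ↔ σ u ∉ Z)
    (h3 : 3 ≤ Z.ncard) : IsDoublyResolving G Z := by
  have hZ' : ∀ u ∈ Z, σ u ∉ Z := fun u => (hZ u).mp
  have hconn : G.Preconnected := hG.preconnected fun x => by
    obtain ⟨y, -, hyx, hyσx, -⟩ := Set.exists_mem_ne_of_three_le_ncard hZ' h3 x x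
    exact ⟨y, hyx, hyσx⟩
  intro u v huv
  obtain ⟨y, hyZ, hyu, hyσu, hyv, hyσv⟩ := Set.exists_mem_ne_of_three_le_ncard hZ' h3 u v
  obtain ⟨a, haZ, ha⟩ : ∃ a ∈ Z, a = u ∨ a = σ u := by
    by_cases hu : u ∈ Z
    · exact ⟨u, hu, Or.inl rfl⟩
    · exact ⟨σ u, not_imp_comm.mp (hZ u).mpr hu, Or.inr rfl⟩
  -- `a` resolves `u` and `v`, while `y` is adjacent to both.
  refine ⟨a, haZ, y, hyZ, ?_⟩
  rw [hG.dist_eq_one hyu.symm hyσu, hG.dist_eq_one hyv.symm hyσv]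
  have := hG.dist_ne_dist hconn huv ha
  omega

theorem doublyResolvingDim_eq [Finite V] (hG : G.IsCocktailParty σ) {Z : Set V}
    (hZ : ∀ u, u ∈ Z ↔ σ u ∉ Z) (h3 : 3 ≤ Z.ncard) : doublyResolvingDim G = Z.ncard := by
  have hDR := hG.isDoublyResolving hZ h3
  refine le_antisymm (Nat.sInf_le ⟨Z, hDR, rfl⟩) (le_csInf ⟨_, Z, hDR, rfl⟩ ?_)
  rintro _ ⟨Z', hZ', rfl⟩
  have := hG.involutive.card_le_two_mul_ncard (hG.mem_or_apply_mem hZ')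
  have := hG.involutive.two_mul_ncard_eq_card hZ
  omega

end IsCocktailParty

end SimpleGraph

theorem cocktailParty_isCocktailParty {m : ℕ} (hm : m ≠ 0) :
    (cocktailParty (m + m)).IsCocktailParty (· + (m : ZMod (m + m))) := by
  have hmm : (m : ZMod (m + m)) + m = 0 := by rw [← Nat.cast_add, ZMod.natCast_self]
  refine ⟨fun x => by simp only [add_assoc, hmm, add_zero], fun x h => ?_, fun x y => ?_⟩
  · have hdvd : m + m ∣ m := (ZMod.natCast_eq_zero_iff _ _).mp (add_eq_left.mp h)
    have := Nat.le_of_dvd (Nat.pos_of_ne_zero hm) hdvd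
    omega
  · have hhalf : (m + m) / 2 = m := by omega
    simp only [cocktailParty, hhalf]
    constructor
    · rintro ⟨hxy, hyx, -⟩
      exact ⟨hxy, fun h => hyx (by rw [h]; ring)⟩
    · rintro ⟨hxy, hyx⟩
      exact ⟨hxy, fun h => hyx (by linear_combination h),
        fun h => hyx (by linear_combination -h - hmm)⟩

theorem ZMod.val_add_natCast_lt_iff {m : ℕ} [NeZero (m + m)] (t : ZMod (m + m)) :
    (t + m).val < m ↔ m ≤ t.val := by
  have hm : (m : ZMod (m + m)).val = m :=
    ZMod.val_cast_of_lt (by have := NeZero.ne (m + m); omega)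
  rcases lt_or_ge (t.val + m) (m + m) with h | h
  · rw [ZMod.val_add_of_lt (by rwa [hm]), hm]
    omega
  · have := ZMod.val_add_val_of_le (a := t) (b := m) (by rwa [hm])
    have := t.val_lt
    omega

theorem ZMod.mem_image_natCast_Icc_one_iff {n : ℕ} [NeZero n] (m : ℕ) (x : ZMod n) :
    x ∈ (fun i : ℕ => (i : ZMod n)) '' Set.Icc 1 m ↔ (x - 1).val < m := by
  constructor
  · rintro ⟨i, ⟨hi1, him⟩, rfl⟩
    rw [← Nat.cast_one, ← Nat.cast_sub hi1, ZMod.val_natCast]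
    exact (Nat.mod_le _ _).trans_lt (by omega)
  · intro h
    refine ⟨(x - 1).val + 1, ⟨by omega, by omega⟩, ?_⟩
    simp only [Nat.cast_add, ZMod.natCast_zmod_val, Nat.cast_one, sub_add_cancel]

theorem ZMod.mem_image_natCast_Icc_one_iff_add_notMem {m : ℕ} [NeZero (m + m)]
    (u : ZMod (m + m)) :
    u ∈ (fun i : ℕ => (i : ZMod (m + m))) '' Set.Icc 1 m ↔
      u + m ∉ (fun i : ℕ => (i : ZMod (m + m))) '' Set.Icc 1 m := by
  rw [mem_image_natCast_Icc_one_iff, mem_image_natCast_Icc_one_iff, add_sub_right_comm,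
    val_add_natCast_lt_iff, not_le]

theorem cocktailParty_doublyResolvingDim (n : ℕ) (hn : 8 ≤ n) (hev : Even n) (k : ℕ)
    (hk : k = n / 2 - 1) :
    doublyResolvingDim (cocktailParty n) = k + 1 ∧
    IsDoublyResolving (cocktailParty n) ((fun i : ℕ => (i : ZMod n)) '' Set.Icc 1 (k + 1)) := by
  obtain ⟨m, rfl⟩ := hev
  have hkm : k + 1 = m := by omega
  rw [hkm]
  have : NeZero (m + m) := ⟨by omega⟩
  have hG := cocktailParty_isCocktailParty (m := m) (by omega)
  have hZ := ZMod.mem_image_natCast_Icc_one_iff_add_notMem (m := m)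
  have hcard := (hG.involutive.two_mul_ncard_eq_card hZ).trans (Nat.card_zmod _)
  exact ⟨(hG.doublyResolvingDim_eq hZ (by omega)).trans (by omega),
    hG.isDoublyResolving hZ (by omega)⟩
end
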